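/- Let μ and ν be vectors of positive reals of length N. Then the Hausdorff distance between the unit balls D_ν and D_μ with respect to the C*-norm satisfies Haus_{‖·‖_A}(D_ν, D_μ) ≤ max{ max_{1≤k≤N} |1 − √(μ_k)/√(ν_k)| · √(m_k)/√(μ_k), max_{1≤k≤N} |1 − √(ν_k)/√(μ_k)| · √(m_k)/√(ν_k) }. -/

import Mathlib

open Filter Topology

/-- The direct sum `A = ⊕ₖ M_{m k}(ℂ)`, realized as block operators on the Euclidean
spaces `ℂ^{m k}`; the `Pi` sup-norm is then exactly the C*-norm
`‖a‖_A = maxₖ ‖a k‖`, where `‖a k‖` is the ℓ²→ℓ² operator norm of the `k`-th block. -/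
noncomputable abbrev BlockAlg (N : ℕ) (m : Fin N → ℕ) : Type :=
  ∀ k : Fin N, EuclideanSpace ℂ (Fin (m k)) →L[ℂ] EuclideanSpace ℂ (Fin (m k))

/-- The weighted Hilbert–Schmidt norm `‖a‖_μ = (Σₖ (μ k / m k) · Tr((a k)^* (a k)))^{1/2}`. -/
noncomputable def hsNorm {N : ℕ} {m : Fin N → ℕ} (μ : Fin N → ℝ) (a : BlockAlg N m) : ℝ :=
  Real.sqrt (∑ k, (μ k / (m k : ℝ)) *
    (LinearMap.trace ℂ (EuclideanSpace ℂ (Fin (m k)))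
      ((ContinuousLinearMap.adjoint (a k) ∘L a k :
          EuclideanSpace ℂ (Fin (m k)) →L[ℂ] EuclideanSpace ℂ (Fin (m k))) :
        EuclideanSpace ℂ (Fin (m k)) →ₗ[ℂ] EuclideanSpace ℂ (Fin (m k)))).re)

/-- The closed unit ball `D_μ = {a ∈ A : ‖a‖_μ ≤ 1}`. -/
noncomputable def hsBall {N : ℕ} {m : Fin N → ℕ} (μ : Fin N → ℝ) : Set (BlockAlg N m) :=
  {a | hsNorm μ a ≤ 1}

/-! Rescaling the `k`-th block of `a ∈ D_ν` by `√ν_k / √μ_k` lands in `D_μ` and moves that block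
by `|1 - √ν_k / √μ_k| · ‖a_k‖`. The operator norm of a block is at most its Hilbert–Schmidt norm,
which membership in `D_ν` bounds by `√m_k / √ν_k`. -/

open scoped InnerProductSpace

section OrthonormalBasis

variable {𝕜 E F ι : Type*} [RCLike 𝕜] [Fintype ι] [NormedAddCommGroup E] [InnerProductSpace 𝕜 E]

lemma OrthonormalBasis.re_trace_adjoint_comp_self [NormedAddCommGroup F] [InnerProductSpace 𝕜 F]
    [CompleteSpace E] [CompleteSpace F] (b : OrthonormalBasis ι 𝕜 E) (T : E →L[𝕜] F) :
    RCLike.re (LinearMap.trace 𝕜 E ((ContinuousLinearMap.adjoint T ∘L T : E →L[𝕜] E) :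
      E →ₗ[𝕜] E)) = ∑ i, ‖T (b i)‖ ^ 2 := by
  rw [LinearMap.trace_eq_sum_inner _ b, map_sum]
  refine Fintype.sum_congr _ _ fun i => ?_
  rw [ContinuousLinearMap.coe_coe, ContinuousLinearMap.comp_apply,
    ContinuousLinearMap.adjoint_inner_right, inner_self_eq_norm_sq]

lemma OrthonormalBasis.opNorm_le_sqrt_sum_norm_sq [SeminormedAddCommGroup F] [NormedSpace 𝕜 F]
    (b : OrthonormalBasis ι 𝕜 E) (T : E →L[𝕜] F) :
    ‖T‖ ≤ √(∑ i, ‖T (b i)‖ ^ 2) := by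
  refine T.opNorm_le_bound (Real.sqrt_nonneg _) fun x => ?_
  calc ‖T x‖ = ‖∑ i, ⟪b i, x⟫_𝕜 • T (b i)‖ := by
        conv_lhs => rw [← b.sum_repr' x]
        simp only [map_sum, map_smul]
    _ ≤ ∑ i, ‖⟪b i, x⟫_𝕜‖ * ‖T (b i)‖ := norm_sum_le_of_le _ fun i _ => norm_smul_le _ _
    _ ≤ √(∑ i, ‖⟪b i, x⟫_𝕜‖ ^ 2) * √(∑ i, ‖T (b i)‖ ^ 2) := Real.sum_mul_le_sqrt_mul_sqrt _ _ _
    _ = √(∑ i, ‖T (b i)‖ ^ 2) * ‖x‖ := by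
        rw [b.sum_sq_norm_inner_right, Real.sqrt_sq (norm_nonneg x), mul_comm]

end OrthonormalBasis

section BlockAlg

variable {N : ℕ} {m : Fin N → ℕ}

local notation "e" => EuclideanSpace.basisFun _ ℂ

lemma hsNorm_eq (μ : Fin N → ℝ) (a : BlockAlg N m) :
    hsNorm μ a = √(∑ k, μ k / m k * ∑ j, ‖a k (e j)‖ ^ 2) := by
  unfold hsNorm
  simp only [← RCLike.re_to_complex, OrthonormalBasis.re_trace_adjoint_comp_self e]

lemma mem_hsBall_iff {μ : Fin N → ℝ} {a : BlockAlg N m} :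
    a ∈ hsBall μ ↔ ∑ k, μ k / m k * ∑ j, ‖a k (e j)‖ ^ 2 ≤ 1 := by
  rw [hsBall, Set.mem_ofPred_eq, hsNorm_eq, Real.sqrt_le_one]

lemma hsNorm_smul_blocks (μ c : Fin N → ℝ) (a : BlockAlg N m) :
    hsNorm μ (fun k => (c k : ℂ) • a k) = hsNorm (fun k => c k ^ 2 * μ k) a := by
  simp only [hsNorm_eq, smul_apply, norm_smul, Complex.norm_real,
    Real.norm_eq_abs, mul_pow, sq_abs, ← Finset.mul_sum]
  congr 1
  refine Fintype.sum_congr _ _ fun k => ?_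
  ring

lemma norm_le_of_mem_hsBall {ν : Fin N → ℝ} (hν : ∀ k, 0 < ν k) {a : BlockAlg N m}
    (ha : a ∈ hsBall ν) (k : Fin N) : ‖a k‖ ≤ √(m k) / √(ν k) := by
  set S := ∑ j, ‖a k (e j)‖ ^ 2
  have hS : S ≤ m k / ν k := by
    rcases Nat.eq_zero_or_pos (m k) with hmk | hmk
    · have : IsEmpty (Fin (m k)) := by rw [hmk]; infer_instance
      simp [S, hmk]
    have hterm : ν k / m k * S ≤ 1 :=
      (Finset.single_le_sum (fun i _ => by positivity [(hν i).le]) (Finset.mem_univ k)).trans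
        (mem_hsBall_iff.mp ha)
    rw [le_div_iff₀ (hν k)]
    rw [div_mul_eq_mul_div, div_le_one (by exact_mod_cast hmk)] at hterm
    linarith
  calc ‖a k‖ ≤ √S := OrthonormalBasis.opNorm_le_sqrt_sum_norm_sq e (a k)
    _ ≤ √(m k / ν k) := Real.sqrt_le_sqrt hS
    _ = √(m k) / √(ν k) := Real.sqrt_div (Nat.cast_nonneg _) _

lemma exists_mem_hsBall_dist_le [Nonempty (Fin N)] {μ ν : Fin N → ℝ} (hμ : ∀ k, 0 < μ k)
    (hν : ∀ k, 0 < ν k) {a : BlockAlg N m} (ha : a ∈ hsBall ν) {R : ℝ}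
    (hR : ∀ k, |1 - √(ν k) / √(μ k)| * (√(m k) / √(ν k)) ≤ R) :
    ∃ b ∈ hsBall μ, dist a b ≤ R := by
  set c : Fin N → ℝ := fun k => √(ν k) / √(μ k)
  have hcμ : (fun k => c k ^ 2 * μ k) = ν := funext fun k => by
    simp only [c, div_pow, Real.sq_sqrt (hν k).le, Real.sq_sqrt (hμ k).le]
    field_simp [(hμ k).ne']
  refine ⟨fun k => (c k : ℂ) • a k, ?_, dist_pi_le_iff'.mpr fun k => ?_⟩
  · rwa [hsBall, Set.mem_ofPred_eq, hsNorm_smul_blocks, hcμ]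
  · calc dist (a k) ((c k : ℂ) • a k) = |1 - c k| * ‖a k‖ := by
          have hsub : a k - (c k : ℂ) • a k = ((1 - c k : ℝ) : ℂ) • a k := by
            rw [Complex.ofReal_sub, Complex.ofReal_one]
            module
          rw [dist_eq_norm, hsub, norm_smul, Complex.norm_real, Real.norm_eq_abs]
      _ ≤ |1 - c k| * (√(m k) / √(ν k)) := by gcongr; exact norm_le_of_mem_hsBall hν ha k
      _ ≤ R := hR k

end BlockAlg

theorem hausdorffDist_hsBall_le_general
    {N : ℕ} (hN : 1 ≤ N) (m : Fin N → ℕ)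
    (μ ν : Fin N → ℝ) (hμpos : ∀ k, 0 < μ k) (hνpos : ∀ k, 0 < ν k) :
    Metric.hausdorffDist (hsBall (m := m) ν) (hsBall (m := m) μ) ≤
      max
        (Finset.univ.sup' (Finset.univ_nonempty_iff.mpr ⟨⟨0, hN⟩⟩)
          (fun k => |1 - Real.sqrt (μ k) / Real.sqrt (ν k)| *
            (Real.sqrt (m k) / Real.sqrt (μ k))))
        (Finset.univ.sup' (Finset.univ_nonempty_iff.mpr ⟨⟨0, hN⟩⟩)
          (fun k => |1 - Real.sqrt (ν k) / Real.sqrt (μ k)| *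
            (Real.sqrt (m k) / Real.sqrt (ν k)))) := by
  have : Nonempty (Fin N) := ⟨⟨0, hN⟩⟩
  refine Metric.hausdorffDist_le_of_mem_dist ?_ (fun a ha => ?_) (fun a ha => ?_)
  · exact le_max_of_le_right (Finset.le_sup'_of_le _ (Finset.mem_univ ⟨0, hN⟩) (by positivity))
  · exact exists_mem_hsBall_dist_le hμpos hνpos ha
      fun k => le_max_of_le_right (Finset.le_sup'_of_le _ (Finset.mem_univ k) le_rfl)
  · exact exists_mem_hsBall_dist_le hνpos hμpos ha
      fun k => le_max_of_le_left (Finset.le_sup'_of_le _ (Finset.mem_univ k) le_rfl)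

/-- The Hausdorff distance between the unit balls `D_ν` and `D_μ`
with respect to the C*-norm is bounded by
`max{ maxₖ |1 − √μₖ/√νₖ|·√mₖ/√μₖ , maxₖ |1 − √νₖ/√μₖ|·√mₖ/√νₖ }`. -/
theorem hausdorffDist_hsBall_le
    {N : ℕ} (hN : 1 ≤ N) (m : Fin N → ℕ) (hm : ∀ k, 1 ≤ m k)
    (μ ν : Fin N → ℝ) (hμpos : ∀ k, 0 < μ k) (hνpos : ∀ k, 0 < ν k) :
    Metric.hausdorffDist (hsBall (m := m) ν) (hsBall (m := m) μ) ≤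
      max
        (Finset.univ.sup' (Finset.univ_nonempty_iff.mpr ⟨⟨0, hN⟩⟩)
          (fun k => |1 - Real.sqrt (μ k) / Real.sqrt (ν k)| *
            (Real.sqrt (m k) / Real.sqrt (μ k))))
        (Finset.univ.sup' (Finset.univ_nonempty_iff.mpr ⟨⟨0, hN⟩⟩)
          (fun k => |1 - Real.sqrt (ν k) / Real.sqrt (μ k)| *
            (Real.sqrt (m k) / Real.sqrt (ν k)))) :=
  hausdorffDist_hsBall_le_general hN m μ ν hμpos hνpos
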